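/- Let 1 ≤ N < L be integers, set ρ = N/L and 𝕣₀ = ρ^ρ(1−ρ)^{1−ρ}, and let z ∈ ℂ with 0 < |z| < 𝕣₀. With L_z and R_z the sets of roots of w^N(w+1)^{L−N} = z^L having Re(w) < −ρ and Re(w) > −ρ respectively, one has ∏_{u∈L_z} (−u)^N = ∏_{v∈R_z} (v+1)^{L−N}. -/

import Mathlib

/-!
Write `c = z ^ L`; the hypothesis on `z` says `‖c‖ < ρ ^ N (1 - ρ) ^ (L - N)`. Hence, for a fixed
`N`-th root `d` of `c` and each `N`-th root of unity `u`, the map `w ↦ u d (w + 1) ^ (-(L - N) / N)`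
is a contraction of a closed disc of radius `r < ρ`, and its fixed points are `N` distinct roots
with `‖w‖ < ρ`, hence in `R_z`. The reflection `w ↦ -1 - w` swaps `N` and `L - N` and yields
`L - N` roots in `L_z`. Since the polynomial has degree `L`, these are all the roots, so Vieta gives
`∏_{L_z ∪ R_z} (-w) = -c`. Comparing its `N`-th power with `∏_{R_z} (-v) ^ N (v + 1) ^ (L - N) =
(-c) ^ N` and cancelling `∏_{R_z} (-v) ^ N` gives the identity.
-/

open Complex Metric Filter Topology Polynomial Finset

lemma one_sub_le_norm_add_one {w : ℂ} {r : ℝ} (hw : ‖w‖ ≤ r) : 1 - r ≤ ‖w + 1‖ := by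
  have := norm_sub_le (w + 1) w
  rw [add_sub_cancel_left, norm_one] at this
  linarith

lemma norm_cpow_neg_le {x : ℂ} {a γ : ℝ} (ha : 0 < a) (hax : a ≤ ‖x‖) (hγ : 0 ≤ γ) :
    ‖x ^ (-(γ : ℂ))‖ ≤ a ^ (-γ) := by
  rw [← ofReal_neg, norm_cpow_real]
  exact Real.rpow_le_rpow_of_nonpos ha hax (neg_nonpos.2 hγ)

theorem exists_mul_add_one_cpow_neg_eq_self {β r : ℝ} (hβ : 0 ≤ β) (hr : 0 ≤ r)
    (hβr : β * r < 1 - r) {d : ℂ} (hd : ‖d‖ ≤ r * (1 - r) ^ β) :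
    ∃ w, ‖w‖ ≤ r ∧ d * (w + 1) ^ (-(β : ℂ)) = w := by
  set F : ℂ → ℂ := fun w ↦ d * (w + 1) ^ (-(β : ℂ))
  have hr1 : 0 < 1 - r := by nlinarith
  have hball : ∀ w ∈ closedBall (0 : ℂ) r, 1 - r ≤ ‖w + 1‖ := fun w hw ↦
    one_sub_le_norm_add_one (mem_closedBall_zero_iff.1 hw)
  have hmaps : Set.MapsTo F (closedBall 0 r) (closedBall 0 r) := by
    intro w hw
    rw [mem_closedBall_zero_iff, norm_mul]
    calc ‖d‖ * ‖(w + 1) ^ (-(β : ℂ))‖ ≤ r * (1 - r) ^ β * (1 - r) ^ (-β) := by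
          gcongr
          exact norm_cpow_neg_le hr1 (hball w hw) hβ
      _ = r := by rw [Real.rpow_neg hr1.le, mul_assoc, mul_inv_cancel₀ (by positivity), mul_one]
  have hderiv : ∀ w ∈ closedBall (0 : ℂ) r,
      HasDerivWithinAt F (d * (-(β : ℂ) * (w + 1) ^ (-(β : ℂ) - 1) * 1)) (closedBall 0 r) w := by
    intro w hw
    have hslit : w + 1 ∈ slitPlane := by
      rw [add_comm]
      exact mem_slitPlane_of_norm_lt_one ((mem_closedBall_zero_iff.1 hw).trans_lt (by linarith))
    exact (((hasDerivAt_id w).add_const 1).cpow_const hslit).const_mul d |>.hasDerivWithinAt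
  have hbound : ∀ w ∈ closedBall (0 : ℂ) r,
      ‖d * (-(β : ℂ) * (w + 1) ^ (-(β : ℂ) - 1) * 1)‖₊ ≤ Real.toNNReal (β * r / (1 - r)) := by
    intro w hw
    rw [← NNReal.coe_le_coe, coe_nnnorm, Real.coe_toNNReal _ (by positivity), mul_one,
      norm_mul, norm_mul, norm_neg, norm_real, Real.norm_of_nonneg hβ,
      show -(β : ℂ) - 1 = -((β + 1 : ℝ) : ℂ) by push_cast; ring]
    calc ‖d‖ * (β * ‖(w + 1) ^ (-((β + 1 : ℝ) : ℂ))‖)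
        ≤ r * (1 - r) ^ β * (β * (1 - r) ^ (-(β + 1))) := by
          gcongr
          exact norm_cpow_neg_le hr1 (hball w hw) (by linarith)
      _ = β * r / (1 - r) := by
          rw [Real.rpow_neg hr1.le, Real.rpow_add hr1, Real.rpow_one]
          field_simp
  have hcontr : ContractingWith (Real.toNNReal (β * r / (1 - r))) (hmaps.restrict F _ _) :=
    ⟨Real.toNNReal_lt_one.2 ((div_lt_one hr1).2 hβr), LipschitzOnWith.mapsToRestrict hmaps
      ((convex_closedBall 0 r).lipschitzOnWith_of_nnnorm_hasDerivWithin_le hderiv hbound)⟩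
  obtain ⟨w, hw, hfix, -⟩ := hcontr.exists_fixedPoint' isClosed_closedBall.isComplete hmaps
    (mem_closedBall_self hr) (edist_ne_top _ _)
  exact ⟨w, mem_closedBall_zero_iff.1 hw, hfix⟩

lemma exists_lt_pow_mul_one_sub_pow_lt {A B : ℕ} {ρ c : ℝ} (hρ : 0 < ρ)
    (hc : c < ρ ^ A * (1 - ρ) ^ B) : ∃ r, 0 < r ∧ r < ρ ∧ c ≤ r ^ A * (1 - r) ^ B := by
  have hcont : Continuous fun x : ℝ ↦ x ^ A * (1 - x) ^ B := by fun_prop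
  have hnear : ∀ᶠ x in 𝓝[<] ρ, c < x ^ A * (1 - x) ^ B :=
    nhdsWithin_le_nhds ((hcont.tendsto ρ).eventually (lt_mem_nhds hc))
  obtain ⟨r, hcr, hr0, hrρ⟩ := (hnear.and (Ioo_mem_nhdsLT hρ)).exists
  exact ⟨r, hr0, hrρ, hcr.le⟩

lemma rpow_mul_one_sub_rpow_pow {x : ℝ} (h0 : 0 ≤ x) (h1 : x ≤ 1) {A B : ℕ}
    (hx : x * (A + B) = A) : (x ^ x * (1 - x) ^ (1 - x)) ^ (A + B) = x ^ A * (1 - x) ^ B := by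
  have h1x : (1 - x) * (A + B) = B := by linarith
  rw [mul_pow, ← Real.rpow_natCast, ← Real.rpow_natCast ((1 - x) ^ (1 - x)),
    ← Real.rpow_mul h0, ← Real.rpow_mul (by linarith), Nat.cast_add, hx, h1x,
    Real.rpow_natCast, Real.rpow_natCast]

lemma cpow_neg_div_pow_mul_pow {x : ℂ} (hx : x ≠ 0) {A : ℕ} (hA : A ≠ 0) (B : ℕ) :
    (x ^ (-(((B : ℝ) / A : ℝ) : ℂ))) ^ A * x ^ B = 1 := by
  rw [← cpow_nat_mul, show (A : ℂ) * -(((B : ℝ) / A : ℝ) : ℂ) = -(B : ℂ) by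
    push_cast; field_simp, cpow_neg, cpow_natCast, inv_mul_cancel₀ (pow_ne_zero _ hx)]

theorem exists_finset_card_eq_pow_mul_add_one_pow_eq {A B : ℕ} (hA : 0 < A) {c : ℂ} (hc : c ≠ 0)
    (hcr : ‖c‖ < ((A : ℝ) / (A + B)) ^ A * (1 - (A : ℝ) / (A + B)) ^ B) :
    ∃ S : Finset ℂ, #S = A ∧ ∀ w ∈ S, w ^ A * (w + 1) ^ B = c ∧ ‖w‖ < (A : ℝ) / (A + B) := by
  obtain ⟨r, hr0, hrρ, hcr⟩ := exists_lt_pow_mul_one_sub_pow_lt (by positivity) hcr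
  set β : ℝ := (B : ℝ) / A
  have hβr : β * r < 1 - r := by
    rw [lt_div_iff₀ (by positivity)] at hrρ
    rw [div_mul_eq_mul_div, div_lt_iff₀ (by positivity)]
    linarith
  obtain ⟨d, hd⟩ := IsAlgClosed.exists_pow_nat_eq c hA
  have hd0 : d ≠ 0 := by rintro rfl; exact hc (by rw [← hd, zero_pow hA.ne'])
  have hdr : ‖d‖ ≤ r * (1 - r) ^ β := by
    have hr1 : 0 ≤ 1 - r := by nlinarith [show 0 ≤ β by positivity]
    rw [← pow_le_pow_iff_left₀ (norm_nonneg _) (by positivity) hA.ne', ← norm_pow, hd, mul_pow,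
      ← Real.rpow_natCast ((1 - r) ^ β), ← Real.rpow_mul hr1, div_mul_cancel₀ _ (by positivity),
      Real.rpow_natCast]
    exact hcr
  have hfix : ∀ u ∈ nthRootsFinset A (1 : ℂ), ∃ w, ‖w‖ ≤ r ∧ u * d * (w + 1) ^ (-(β : ℂ)) = w :=
    fun u hu ↦ exists_mul_add_one_cpow_neg_eq_self (by positivity) hr0.le hβr <| by
      rw [norm_mul, norm_eq_one_of_pow_eq_one ((mem_nthRootsFinset hA 1).1 hu) hA.ne', one_mul]
      exact hdr
  choose! w hw_norm hw_fix using hfix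
  have hw1 : ∀ u ∈ nthRootsFinset A (1 : ℂ), w u + 1 ≠ 0 := fun u hu h ↦ by
    have := one_sub_le_norm_add_one (hw_norm u hu)
    rw [h, norm_zero] at this
    nlinarith [show 0 ≤ β by positivity]
  refine ⟨(nthRootsFinset A (1 : ℂ)).image w, ?_, ?_⟩
  · rw [card_image_of_injOn, (isPrimitiveRoot_exp A hA.ne').card_nthRootsFinset]
    intro u hu u' hu' h
    have hfix := (hw_fix u hu).trans (h.trans (hw_fix u' hu').symm)
    rw [h, mul_assoc, mul_assoc] at hfix
    exact mul_right_cancel₀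
      (mul_ne_zero hd0 fun h0 ↦ hw1 u' hu' ((cpow_eq_zero_iff _ _).1 h0).1) hfix
  · simp only [Finset.mem_image]
    rintro _ ⟨u, hu, rfl⟩
    refine ⟨?_, (hw_norm u hu).trans_lt hrρ⟩
    calc w u ^ A * (w u + 1) ^ B
        = (u * d * (w u + 1) ^ (-(β : ℂ))) ^ A * (w u + 1) ^ B := by rw [hw_fix u hu]
      _ = u ^ A * d ^ A * (((w u + 1) ^ (-(β : ℂ))) ^ A * (w u + 1) ^ B) := by ring
      _ = c := by
        rw [(mem_nthRootsFinset hA 1).1 hu, hd, cpow_neg_div_pow_mul_pow (hw1 u hu) hA.ne',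
          one_mul, mul_one]

theorem le_card_of_forall_re_gt_mem {A B : ℕ} (hA : 0 < A) {c : ℂ} (hc : c ≠ 0)
    (hcr : ‖c‖ < ((A : ℝ) / (A + B)) ^ A * (1 - (A : ℝ) / (A + B)) ^ B) {T : Finset ℂ}
    (hT : ∀ w, w ^ A * (w + 1) ^ B = c → -((A : ℝ) / (A + B)) < w.re → w ∈ T) : A ≤ #T := by
  obtain ⟨S, hS, hS_roots⟩ := exists_finset_card_eq_pow_mul_add_one_pow_eq hA hc hcr
  exact hS ▸ card_le_card fun w hw ↦ hT w (hS_roots w hw).1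
    (neg_lt_of_abs_lt ((abs_re_le_norm w).trans_lt (hS_roots w hw).2))

lemma neg_one_sub_pow_mul_add_one_pow {R : Type*} [CommRing R] (y : R) (A B : ℕ) :
    (-1 - y) ^ A * (-1 - y + 1) ^ B = (-1) ^ (A + B) * (y ^ B * (y + 1) ^ A) := by
  rw [show -1 - y = -(y + 1) by ring, show -(y + 1) + 1 = -y by ring, neg_pow, neg_pow, pow_add]
  ring

theorem le_card_of_forall_re_lt_mem {A B : ℕ} (hB : 0 < B) {c : ℂ} (hc : c ≠ 0)
    (hcr : ‖c‖ < ((A : ℝ) / (A + B)) ^ A * (1 - (A : ℝ) / (A + B)) ^ B) {T : Finset ℂ}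
    (hT : ∀ w, w ^ A * (w + 1) ^ B = c → w.re < -((A : ℝ) / (A + B)) → w ∈ T) : B ≤ #T := by
  have hσ : (B : ℝ) / (B + A) = 1 - A / (A + B) := by field_simp; ring
  refine (le_card_of_forall_re_gt_mem (B := A) (c := (-1) ^ (A + B) * c)
    (T := T.image fun w ↦ -1 - w) hB (by simp [hc]) ?_ fun y hy hre ↦ ?_).trans card_image_le
  · rw [norm_mul, norm_pow, norm_neg, norm_one, one_pow, one_mul, hσ, sub_sub_cancel, mul_comm]
    exact hcr
  refine Finset.mem_image.2 ⟨-1 - y, hT _ ?_ ?_, by ring⟩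
  · rw [neg_one_sub_pow_mul_add_one_pow, hy, ← mul_assoc, ← mul_pow, neg_one_mul, neg_neg,
      one_pow, one_mul]
  · rw [hσ] at hre
    simp only [sub_re, neg_re, one_re]
    linarith

namespace Polynomial

variable {R : Type*} [CommRing R]

lemma prod_neg_eq_eval_zero [IsDomain R] {p : R[X]} (hp : p.Monic) {S : Finset R}
    (hS : ∀ x ∈ S, p.IsRoot x) (hcard : #S = p.natDegree) : ∏ x ∈ S, (-x) = p.eval 0 := by
  have hsub : S.val ≤ p.roots := (Multiset.le_iff_subset S.nodup).2 fun x hx ↦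
    (mem_roots hp.ne_zero).2 (hS x hx)
  have hroots : p.roots = S.val :=
    (Multiset.eq_of_le_of_card_le hsub ((card_roots' p).trans hcard.symm.le)).symm
  conv_rhs => rw [← prod_multiset_X_sub_C_of_monic_of_roots_card_eq hp
    (by rw [hroots]; exact hcard), hroots, eval_multiset_prod, Multiset.map_map]
  simp only [Function.comp_def, eval_sub, eval_X, eval_C, zero_sub]
  rfl

variable {A B : ℕ}

lemma monic_X_pow_mul_X_add_one_pow : (X ^ A * (X + 1) ^ B : R[X]).Monic :=
  (monic_X_pow A).mul ((monic_X_add_C 1).pow B)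

variable [Nontrivial R]

lemma natDegree_X_pow_mul_X_add_one_pow : (X ^ A * (X + 1) ^ B : R[X]).natDegree = A + B := by
  rw [← C_1, (monic_X_pow A).natDegree_mul ((monic_X_add_C 1).pow B), natDegree_X_pow,
    (monic_X_add_C 1).natDegree_pow, natDegree_X_add_C, mul_one]

lemma natDegree_X_pow_mul_X_add_one_pow_sub_C (c : R) :
    (X ^ A * (X + 1) ^ B - C c).natDegree = A + B := by
  rw [natDegree_sub_C, natDegree_X_pow_mul_X_add_one_pow]

lemma monic_X_pow_mul_X_add_one_pow_sub_C (hAB : A + B ≠ 0) (c : R) :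
    (X ^ A * (X + 1) ^ B - C c).Monic := by
  refine monic_X_pow_mul_X_add_one_pow.sub_of_left (degree_C_le.trans_lt ?_)
  rw [degree_eq_natDegree monic_X_pow_mul_X_add_one_pow.ne_zero, natDegree_X_pow_mul_X_add_one_pow]
  exact_mod_cast Nat.pos_of_ne_zero hAB

end Polynomial

section RootsOfPowMulAddOnePow

variable {R : Type*} [CommRing R] [IsDomain R] {A B : ℕ} {c : R} {S : Finset R}

lemma card_le_of_forall_pow_mul_add_one_pow_eq (hAB : A + B ≠ 0)
    (hS : ∀ w ∈ S, w ^ A * (w + 1) ^ B = c) : #S ≤ A + B := by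
  have hp := monic_X_pow_mul_X_add_one_pow_sub_C hAB c
  rw [← natDegree_X_pow_mul_X_add_one_pow_sub_C c]
  exact card_le_degree_of_subset_roots fun w hw ↦ (mem_roots hp.ne_zero).2 (by simp [hS w hw])

lemma prod_neg_eq_neg_of_forall_pow_mul_add_one_pow_eq (hA : A ≠ 0)
    (hS : ∀ w ∈ S, w ^ A * (w + 1) ^ B = c) (hcard : #S = A + B) : ∏ w ∈ S, (-w) = -c := by
  rw [prod_neg_eq_eval_zero (monic_X_pow_mul_X_add_one_pow_sub_C (A := A) (B := B) (by omega) c)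
    (fun w hw ↦ by simp [hS w hw]) (by rw [natDegree_X_pow_mul_X_add_one_pow_sub_C, hcard])]
  simp [hA]

end RootsOfPowMulAddOnePow

lemma prod_neg_pow_eq_prod {K : Type*} [Field K] [DecidableEq K] {N : ℕ} {c : K} (hc : c ≠ 0)
    {S T : Finset K} (f : K → K) (hST : Disjoint S T) (hprod : ∏ w ∈ S ∪ T, (-w) = -c)
    (hT : ∀ v ∈ T, v ^ N * f v = c) (hcard : #T = N) :
    ∏ u ∈ S, (-u) ^ N = ∏ v ∈ T, f v := by
  have hneg : ((-1 : K) ^ N) ^ N = (-1) ^ N := by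
    rcases Nat.even_or_odd N with h | h <;> simp [h.neg_one_pow]
  have hT0 : ∏ v ∈ T, (-v) ^ N ≠ 0 := prod_ne_zero_iff.2 fun v hv h0 ↦ hc <| by
    rw [← hT v hv, show v ^ N = 0 by simpa using h0, zero_mul]
  refine mul_right_cancel₀ hT0 ?_
  calc (∏ u ∈ S, (-u) ^ N) * ∏ v ∈ T, (-v) ^ N = (-c) ^ N := by
        rw [← prod_union hST, Finset.prod_pow, hprod]
    _ = ∏ v ∈ T, ((-1) ^ N * c) := by
        rw [prod_const, hcard, mul_pow, hneg, neg_pow]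
    _ = (∏ v ∈ T, f v) * ∏ v ∈ T, (-v) ^ N := by
        rw [← prod_mul_distrib]
        refine prod_congr rfl fun v hv ↦ ?_
        rw [← hT v hv, neg_pow]
        ring

/-- With `L_z` and `R_z` the sets of roots of `w^N(w+1)^{L−N} = z^L` having
`Re(w) < −ρ` and `Re(w) > −ρ` respectively (`ρ = N/L`, `0 < |z| < 𝕣₀`), one has
`∏_{u∈L_z} (−u)^N = ∏_{v∈R_z} (v+1)^{L−N}`. -/
theorem prod_Lz_eq_prod_Rz
    (N L : ℕ) (hN : 1 ≤ N) (hNL : N < L)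
    (z : ℂ) (hz : z ≠ 0)
    (hzr : ‖z‖ <
      ((N : ℝ) / L) ^ ((N : ℝ) / L) * (1 - (N : ℝ) / L) ^ (1 - (N : ℝ) / L))
    (Lz Rz : Finset ℂ)
    (hLz : ∀ w : ℂ, w ∈ Lz ↔
      (w ^ N * (w + 1) ^ (L - N) = z ^ L ∧ w.re < -((N : ℝ) / L)))
    (hRz : ∀ w : ℂ, w ∈ Rz ↔
      (w ^ N * (w + 1) ^ (L - N) = z ^ L ∧ -((N : ℝ) / L) < w.re)) :
    (∏ u ∈ Lz, (-u) ^ N) = ∏ v ∈ Rz, (v + 1) ^ (L - N) := by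
  obtain ⟨M, rfl⟩ := Nat.exists_eq_add_of_le hNL.le
  rw [Nat.add_sub_cancel_left] at hLz hRz ⊢
  push_cast at hzr hLz hRz
  set ρ : ℝ := N / (N + M)
  have hρ1 : ρ < 1 := (div_lt_one (by positivity)).2 (by simp; omega)
  have hc : ‖z ^ (N + M)‖ < ρ ^ N * (1 - ρ) ^ M := by
    rw [norm_pow, ← rpow_mul_one_sub_rpow_pow (by positivity) hρ1.le (by simp [ρ]; field_simp)]
    exact pow_lt_pow_left₀ hzr (norm_nonneg z) (by omega)
  have hRz_card := le_card_of_forall_re_gt_mem hN (pow_ne_zero _ hz) hc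
    fun w h1 h2 ↦ (hRz w).2 ⟨h1, h2⟩
  have hLz_card := le_card_of_forall_re_lt_mem (by omega) (pow_ne_zero _ hz) hc
    fun w h1 h2 ↦ (hLz w).2 ⟨h1, h2⟩
  have hdisj : Disjoint Lz Rz := disjoint_left.2 fun w hL hR ↦
    ((hLz w).1 hL).2.not_gt ((hRz w).1 hR).2
  have hroots : ∀ w ∈ Lz ∪ Rz, w ^ N * (w + 1) ^ M = z ^ (N + M) := fun w hw ↦ by
    rcases Finset.mem_union.1 hw with h | h
    exacts [((hLz w).1 h).1, ((hRz w).1 h).1]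
  have hcard := card_le_of_forall_pow_mul_add_one_pow_eq (by omega) hroots
  rw [card_union_of_disjoint hdisj] at hcard
  exact prod_neg_pow_eq_prod (pow_ne_zero _ hz) _ hdisj
    (prod_neg_eq_neg_of_forall_pow_mul_add_one_pow_eq (by omega) hroots
      (by rw [card_union_of_disjoint hdisj]; omega))
    (fun v hv ↦ ((hRz v).1 hv).1) (by omega)
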